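/- arXiv:1907.13411 — 2 statements merged into one kernel-verified Lean document; each statement's English description precedes it below -/
import Mathlib

section
/- For every reward function R : S → ℝ and every policy π : S → A, the discounted value satisfies the closed form V(R, π) = R(s0) + γ · R(P(s0, π(s0))) / (1 − γ). In particular, the value of a policy depends only on its action at s0. -/
/-! Every state other than `s0` is absorbing, so from time `1` on the trajectory stays at
`P s0 (π s0)`: the value is `R s0` plus the geometric series `∑_{t ≥ 1} γ^t R (P s0 (π s0))`. -/

/-- Deterministic transition function: from `s0 = 0`, action `a : Fin 3`
leads to state `a.succ` (i.e. `a ↦ s1`, `b ↦ s2`, `c ↦ s3`); every other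
state is fixed under every action. -/
def P (s : Fin 4) (a : Fin 3) : Fin 4 := if s = 0 then a.succ else s

/-- Trajectory of policy `π` started at `s0 = 0`. -/
def traj (π : Fin 4 → Fin 3) (t : ℕ) : Fin 4 := (fun s => P s (π s))^[t] 0

/-- Discounted value of policy `π` from `s0 = 0` under reward `R` and discount `γ`. -/
noncomputable def V (R : Fin 4 → ℝ) (γ : ℝ) (π : Fin 4 → Fin 3) : ℝ :=
  ∑' t : ℕ, γ ^ t * R (traj π t)

theorem hasSum_pow_mul_of_const_succ {K : Type*} [NormedField K]
    {γ a b : K} (hγ : ‖γ‖ < 1) {r : ℕ → K} (h0 : r 0 = a) (hsucc : ∀ t, r (t + 1) = b) :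
    HasSum (fun t => γ ^ t * r t) (a + γ * b / (1 - γ)) := by
  have htail : HasSum (fun t => γ ^ (t + 1) * r (t + 1)) (γ * b * (1 - γ)⁻¹) := by
    have hterm : (fun t => γ ^ (t + 1) * r (t + 1)) = fun t => γ * b * γ ^ t := by
      funext t
      rw [hsucc, pow_succ]
      ring
    exact hterm ▸ (hasSum_geometric_of_norm_lt_one hγ).mul_left (γ * b)
  simpa only [pow_zero, one_mul, h0, div_eq_mul_inv] using
    HasSum.zero_add (f := fun t => γ ^ t * r t) htail

theorem P_of_ne_zero {s : Fin 4} (hs : s ≠ 0) (a : Fin 3) : P s a = s := if_neg hs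

theorem P_zero_ne_zero (a : Fin 3) : P 0 a ≠ 0 := Fin.succ_ne_zero a

theorem traj_zero (π : Fin 4 → Fin 3) : traj π 0 = 0 := rfl

theorem traj_succ (π : Fin 4 → Fin 3) (t : ℕ) : traj π (t + 1) = P 0 (π 0) := by
  rw [traj, Function.iterate_succ_apply]
  exact Function.iterate_fixed (f := fun s => P s (π s)) (P_of_ne_zero (P_zero_ne_zero _) _) t

theorem value_closed_form (γ : ℝ) (hγ0 : 0 ≤ γ) (hγ1 : γ < 1) :
    (∀ (R : Fin 4 → ℝ) (π : Fin 4 → Fin 3),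
      V R γ π = R 0 + γ * R (P 0 (π 0)) / (1 - γ)) ∧
    (∀ (R : Fin 4 → ℝ) (π π' : Fin 4 → Fin 3),
      π 0 = π' 0 → V R γ π = V R γ π') := by
  have hγ : ‖γ‖ < 1 := by rwa [Real.norm_of_nonneg hγ0]
  have value_eq (R : Fin 4 → ℝ) (π : Fin 4 → Fin 3) :
      V R γ π = R 0 + γ * R (P 0 (π 0)) / (1 - γ) :=
    (hasSum_pow_mul_of_const_succ hγ (congrArg R (traj_zero π))
      fun t => congrArg R (traj_succ π t)).tsum_eq
  exact ⟨value_eq, fun R π π' h => by rw [value_eq, value_eq, h]⟩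
end

section
/- Under the true reward function R* = (0, −δ, 1, 0) with δ > 0 and discount factor 0 < γ < 1, any policy π_E with π_E(s0) = b is optimal: for every policy π, V(R*, π) ≤ V(R*, π_E), and the inequality is strict whenever π(s0) ≠ b. -/
lemma traj_ne_zero (π : Fin 4 → Fin 3) (t : ℕ) (ht : t ≠ 0) :
    traj π t = (π 0).succ := by
  induction t with
  | zero => simp at ht
  | succ n ih =>
    rw [traj, Function.iterate_succ_apply']
    rcases Nat.eq_zero_or_pos n with h | h
    · subst h; simp [traj, P]
    · rw [show (fun s => P s (π s))^[n] 0 = traj π n from rfl, ih h.ne']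
      simp [P, Fin.succ_ne_zero]

lemma V_eq (R : Fin 4 → ℝ) (γ : ℝ) (hγ0 : 0 ≤ γ) (hγ1 : γ < 1)
    (π : Fin 4 → Fin 3) :
    V R γ π = R 0 + R ((π 0).succ) * (γ / (1 - γ)) := by
  set s := (π 0).succ with hs
  have hfun : (fun t : ℕ => γ ^ t * R (traj π t)) =
      fun t => γ ^ t * R s + (if t = 0 then R 0 - R s else 0) := by
    funext t
    rcases Nat.eq_zero_or_pos t with h | h
    · subst h; simp [traj]
    · rw [traj_ne_zero π t h.ne']; simp [h.ne', hs]
  have hsum1 : Summable fun t : ℕ => γ ^ t * R s :=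
    (summable_geometric_of_lt_one hγ0 hγ1).mul_right _
  have hsum2 : Summable fun t : ℕ => (if t = 0 then R 0 - R s else 0) :=
    summable_of_ne_finset_zero (s := {0}) (by intro b hb; simp at hb; simp [hb])
  have h1 : ∑' t : ℕ, γ ^ t * R s = (1 - γ)⁻¹ * R s := by
    rw [tsum_mul_right, tsum_geometric_of_lt_one hγ0 hγ1]
  have h2 : ∑' t : ℕ, (if t = 0 then R 0 - R s else 0) = R 0 - R s := tsum_ite_eq 0 _
  have hne : (1 : ℝ) - γ ≠ 0 := by linarith
  rw [V, hfun, Summable.tsum_add hsum1 hsum2, h1, h2]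
  field_simp
  ring

theorem expert_optimal_true_reward (δ γ : ℝ) (hδ : 0 < δ)
    (hγ0 : 0 < γ) (hγ1 : γ < 1)
    (πE : Fin 4 → Fin 3) (hE : πE 0 = 1) :
    (∀ π : Fin 4 → Fin 3, V ![0, -δ, 1, 0] γ π ≤ V ![0, -δ, 1, 0] γ πE) ∧
    (∀ π : Fin 4 → Fin 3, π 0 ≠ 1 →
      V ![0, -δ, 1, 0] γ π < V ![0, -δ, 1, 0] γ πE) := by
  have hk : 0 < γ / (1 - γ) := div_pos hγ0 (by linarith)
  have hVE : V ![0, -δ, 1, 0] γ πE = γ / (1 - γ) := by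
    rw [V_eq _ _ hγ0.le hγ1, hE]; norm_num [Matrix.cons_val]; change (1:ℝ) * _ = _; exact one_mul _
  have key : ∀ π : Fin 4 → Fin 3, π 0 ≠ 1 →
      V ![0, -δ, 1, 0] γ π < V ![0, -δ, 1, 0] γ πE := by
    intro π hπ
    rw [hVE, V_eq _ _ hγ0.le hγ1]
    generalize hx : π 0 = x at hπ ⊢
    fin_cases x
    · norm_num; nlinarith
    · exact absurd rfl hπ
    · norm_num [Fin.succ]; positivity
  refine ⟨fun π => ?_, key⟩
  by_cases h : π 0 = 1
  · rw [V_eq _ _ hγ0.le hγ1, V_eq _ _ hγ0.le hγ1, h, hE]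
  · exact (key π h).le
end
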